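/- ODE blow-up lemma: let Y : [R₀, ∞) → (0,∞) be increasing and differentiable, μ nondecreasing positive, n ≥ 1, and suppose that for all R ≥ R₀, (c/R) · μ(c₂ R^{-n/2}) ≤ Y'(R)/Y(R)^{(n+2)/n} for some constants c, c₂ > 0. If ∫_{R₀}^∞ s^{-1} μ(c₂ s^{-n/2}) ds = ∞, then no such globally defined Y exists; equivalently, integrating gives ∫_{R₀}^R c s^{-1} μ(c₂ s^{-n/2}) ds ≤ (n/2)·Y(R₀)^{-2/n} for all R ≥ R₀, which is contradicted as R → ∞. -/

import Mathlib

/-!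
Writing `q = 2/n`, the inequality says that `c/R · μ(c₂ R^{-n/2})` is bounded by the derivative of
`G = -Y^{-q}/q`. Since `G ≤ 0`, integrating from `R₀` bounds every partial integral of this
nonnegative function by `-G(R₀) = (n/2) Y(R₀)^{-2/n}`, so its integral over `(R₀, ∞)` converges.
-/

open MeasureTheory Set

theorem hasDerivAt_neg_rpow_neg_div {Y : ℝ → ℝ} {Y' x q : ℝ} (hY : HasDerivAt Y Y' x)
    (hpos : 0 < Y x) (hq : q ≠ 0) :
    HasDerivAt (fun t => -Y t ^ (-q) / q) (Y' / Y x ^ (q + 1)) x := by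
  refine (((hY.rpow_const (p := -q) (Or.inl hpos.ne')).neg).div_const q).congr_deriv ?_
  rw [show -q - 1 = -(q + 1) by ring, Real.rpow_neg hpos.le]
  field_simp

theorem integrableOn_Ioi_of_nonneg_of_le_deriv {f g g' : ℝ → ℝ} {a M : ℝ}
    (hf_nonneg : ∀ x, a ≤ x → 0 ≤ f x) (hf_int : ∀ b, IntegrableOn f (Icc a b))
    (hg : ∀ x, a ≤ x → HasDerivAt g (g' x) x) (hfg : ∀ x, a ≤ x → f x ≤ g' x)
    (hgM : ∀ x, a ≤ x → g x ≤ M) :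
    IntegrableOn f (Ioi a) := by
  refine integrableOn_Ioi_of_intervalIntegral_norm_bounded (M - g a) a
    (fun b => (hf_int b).mono_set Ioc_subset_Icc_self) Filter.tendsto_id ?_
  filter_upwards [Filter.eventually_ge_atTop a] with b hab
  have h_norm : ∫ x in a..b, ‖f x‖ = ∫ x in a..b, f x :=
    intervalIntegral.integral_congr fun x hx =>
      Real.norm_of_nonneg (hf_nonneg x (uIcc_of_le hab ▸ hx).1)
  have h_ftc : ∫ x in a..b, f x ≤ g b - g a :=
    intervalIntegral.integral_le_sub_of_hasDeriv_right_of_le hab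
      (fun x hx => (hg x hx.1).continuousAt.continuousWithinAt)
      (fun x hx => (hg x hx.1.le).hasDerivWithinAt) (hf_int b) (fun x hx => hfg x hx.1.le)
  linarith [hgM b hab]

theorem antitoneOn_inv_mul_comp_mul_rpow {μ : ℝ → ℝ} (hμ_mono : MonotoneOn μ (Ioi 0))
    (hμ_pos : ∀ s, 0 < s → 0 < μ s) {c₂ p : ℝ} (hc₂ : 0 < c₂) (hp : p ≤ 0) :
    AntitoneOn (fun s => s⁻¹ * μ (c₂ * s ^ p)) (Ioi 0) := by
  intro x hx y hy hxy
  have harg : ∀ s : ℝ, 0 < s → 0 < c₂ * s ^ p := fun s hs => by positivity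
  have hμ_le : μ (c₂ * y ^ p) ≤ μ (c₂ * x ^ p) :=
    hμ_mono (harg y hy) (harg x hx)
      (mul_le_mul_of_nonneg_left (Real.rpow_le_rpow_of_nonpos hx hxy hp) hc₂.le)
  exact mul_le_mul (inv_anti₀ hx hxy) hμ_le (hμ_pos _ (harg y hy)).le (inv_pos.mpr hx).le

theorem ode_blowup_general (n : ℕ) (hn : 1 ≤ n) (R₀ : ℝ) (hR₀ : 0 < R₀)
    (μ : ℝ → ℝ) (hμ_mono : MonotoneOn μ (Set.Ioi 0)) (hμ_pos : ∀ s, 0 < s → 0 < μ s)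
    (Y Y' : ℝ → ℝ)
    (hY_pos : ∀ R, R₀ ≤ R → 0 < Y R)
    (hY_deriv : ∀ R, R₀ ≤ R → HasDerivAt Y (Y' R) R)
    (c c₂ : ℝ) (hc : 0 < c) (hc₂ : 0 < c₂)
    (hineq : ∀ R, R₀ ≤ R →
      c / R * μ (c₂ * R ^ (-(n:ℝ) / 2)) ≤ Y' R / (Y R) ^ ((n + 2 : ℝ) / n))
    (hdiv : ¬ IntegrableOn (fun s : ℝ => s⁻¹ * μ (c₂ * s ^ (-(n:ℝ) / 2)))
      (Set.Ioi R₀) volume) :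
    False := by
  set F : ℝ → ℝ := fun s => s⁻¹ * μ (c₂ * s ^ (-(n:ℝ) / 2))
  have hn₀ : (n : ℝ) ≠ 0 := by exact_mod_cast Nat.one_le_iff_ne_zero.mp hn
  have hp : -(n : ℝ) / 2 ≤ 0 := by linarith [n.cast_nonneg (α := ℝ)]
  have hF_nonneg : ∀ s, R₀ ≤ s → 0 ≤ c * F s := fun s hs =>
    have hs₀ : 0 < s := hR₀.trans_le hs
    (mul_pos hc (mul_pos (inv_pos.mpr hs₀) (hμ_pos _ (by positivity)))).le
  have hF_int : ∀ b, IntegrableOn (fun s => c * F s) (Icc R₀ b) := fun b =>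
    (((antitoneOn_inv_mul_comp_mul_rpow hμ_mono hμ_pos hc₂ hp).mono
      fun s hs => hR₀.trans_le hs.1).integrableOn_isCompact isCompact_Icc).const_mul c
  have hG_deriv : ∀ s, R₀ ≤ s → HasDerivAt (fun t => -Y t ^ (-(2 / n : ℝ)) / (2 / n))
      (Y' s / Y s ^ ((n + 2 : ℝ) / n)) s := fun s hs => by
    convert hasDerivAt_neg_rpow_neg_div (q := 2 / n) (hY_deriv s hs) (hY_pos s hs)
      (by positivity) using 3
    field_simp
    ring
  have hG_nonpos : ∀ s, R₀ ≤ s → -Y s ^ (-(2 / n : ℝ)) / (2 / n) ≤ 0 := fun s hs => by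
    have := Real.rpow_pos_of_pos (hY_pos s hs) (-(2 / n : ℝ))
    exact div_nonpos_of_nonpos_of_nonneg (by linarith) (by positivity)
  refine hdiv ((integrable_const_mul_iff (isUnit_iff_ne_zero.mpr hc.ne') F).mp
    (integrableOn_Ioi_of_nonneg_of_le_deriv hF_nonneg hF_int hG_deriv ?_ hG_nonpos))
  intro s hs
  simpa only [F, div_eq_mul_inv, mul_assoc] using hineq s hs

/-- ODE blow-up lemma: a positive, increasing, differentiable `Y` on `[R₀,∞)`
satisfying `(c/R) μ(c₂ R^{-n/2}) ≤ Y'(R)/Y(R)^{(n+2)/n}` cannot exist globally if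
`∫_{R₀}^∞ s^{-1} μ(c₂ s^{-n/2}) ds = ∞`. -/
theorem ode_blowup (n : ℕ) (hn : 1 ≤ n) (R₀ : ℝ) (hR₀ : 0 < R₀)
    (μ : ℝ → ℝ) (hμ_mono : MonotoneOn μ (Set.Ioi 0)) (hμ_pos : ∀ s, 0 < s → 0 < μ s)
    (Y Y' : ℝ → ℝ)
    (hY_pos : ∀ R, R₀ ≤ R → 0 < Y R)
    (hY_incr : StrictMonoOn Y (Set.Ici R₀))
    (hY_deriv : ∀ R, R₀ ≤ R → HasDerivAt Y (Y' R) R)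
    (c c₂ : ℝ) (hc : 0 < c) (hc₂ : 0 < c₂)
    (hineq : ∀ R, R₀ ≤ R →
      c / R * μ (c₂ * R ^ (-(n:ℝ) / 2)) ≤ Y' R / (Y R) ^ ((n + 2 : ℝ) / n))
    (hdiv : ¬ IntegrableOn (fun s : ℝ => s⁻¹ * μ (c₂ * s ^ (-(n:ℝ) / 2)))
      (Set.Ioi R₀) volume) :
    False :=
  ode_blowup_general n hn R₀ hR₀ μ hμ_mono hμ_pos Y Y' hY_pos hY_deriv c c₂ hc hc₂ hineq hdiv
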